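/- Let A be an n×n real matrix with n ≥ 2 and let 1 ≤ N ≤ n. The uniform unit vector trace estimator without replacement satisfies Var(tr_{U₂}^N(A)) = ((n−N)/(N(n−1))) ( n Σ_{j=1}^n a_{jj}² − tr(A)² ). -/

import Mathlib

/-!
Write `d` for the diagonal of `A`; the estimator at an injective draw `f` is
`(n / N) ∑ᵢ d (f i)`. Permutations of `Fin n` act on injective draws, and transitively on single
indices and on ordered pairs of distinct indices, so `f i` is uniform on `Fin n` and, for
`i ≠ i'`, `(f i, f i')` is uniform on the `n (n - 1)` ordered pairs of distinct indices. This
gives the first two moments of `∑ᵢ d (f i)` in terms of `tr A` and `∑ⱼ d j ^ 2`, and the variance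
is their difference.
-/

open MeasureTheory Matrix

/-- `unitVec n j` is the `j`-th column of the scaled identity matrix `√n · I`,
i.e. `√n` times the `j`-th standard basis vector of `ℝⁿ`. -/
noncomputable def unitVec (n : ℕ) (j : Fin n) : Fin n → ℝ :=
  fun k => Real.sqrt n * if k = j then 1 else 0

/-- The unit vector trace estimator `(1/N) ∑ᵢ wᵢᵗ A wᵢ`, where `wᵢ = unitVec n (f i)`
and `f : Fin N → Fin n` records which (scaled) unit vectors were drawn. -/
noncomputable def unitVectorEstimator (n N : ℕ) (A : Matrix (Fin n) (Fin n) ℝ)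
    (f : Fin N → Fin n) : ℝ :=
  (1 / (N : ℝ)) * ∑ i : Fin N, (unitVec n (f i)) ⬝ᵥ A.mulVec (unitVec n (f i))

/-- The uniform probability measure on `Fin N → Fin n`: `N` indices drawn independently
and uniformly, i.e. unit vector sampling with replacement (`U₁`). -/
noncomputable def withReplacementMeasure (n N : ℕ) : Measure (Fin N → Fin n) :=
  (Fintype.card (Fin N → Fin n) : ENNReal)⁻¹ • Measure.count

/-- The uniform probability measure on injective tuples of indices: `N` distinct indices
drawn uniformly without replacement (`U₂`). -/
noncomputable def withoutReplacementMeasure (n N : ℕ) :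
    Measure {f : Fin N → Fin n // Function.Injective f} :=
  (Fintype.card {f : Fin N → Fin n // Function.Injective f} : ENNReal)⁻¹ • Measure.count

open Finset MulAction

section Equivariant

variable {G X Y : Type*} [Group G] [MulAction G X] [MulAction G Y] [IsPretransitive G Y]
  [Fintype X]

theorem MulActionHom.card_fiber_eq_of_isPretransitive [DecidableEq Y] (φ : X →[G] Y)
    (y y' : Y) :
    #{x | φ x = y} = #{x | φ x = y'} := by
  obtain ⟨g, rfl⟩ := exists_smul_eq G y y'
  refine card_equiv (MulAction.toPerm g) fun x => ?_
  simp [map_smul]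

theorem MulActionHom.card_mul_sum_comp_of_isPretransitive {R : Type*} [CommSemiring R]
    [Fintype Y] (φ : X →[G] Y) (h : Y → R) :
    Fintype.card Y * ∑ x, h (φ x) = Fintype.card X * ∑ y, h y := by
  classical
  set c : Y → R := fun y => #{x | φ x = y}
  have hfib : ∑ x, h (φ x) = ∑ y, c y * h y := by
    rw [← sum_fiberwise univ φ]
    refine sum_congr rfl fun y _ => ?_
    rw [sum_congr rfl fun x hx => by rw [(mem_filter.mp hx).2], sum_const, nsmul_eq_mul]
  have hcard : (Fintype.card X : R) = ∑ y, c y := by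
    rw [← Nat.cast_sum, ← card_eq_sum_card_fiberwise fun x _ => mem_univ (φ x), card_univ]
  calc (Fintype.card Y : R) * ∑ x, h (φ x) = ∑ _y' : Y, ∑ y, c y * h y := by
        rw [hfib, sum_const, card_univ, nsmul_eq_mul]
    _ = ∑ y', ∑ y, c y' * h y := by
        refine sum_congr rfl fun y' _ => sum_congr rfl fun y _ => ?_
        simp only [c, φ.card_fiber_eq_of_isPretransitive y y']
    _ = Fintype.card X * ∑ y, h y := by rw [hcard, sum_mul_sum]

end Equivariant

theorem sum_embedding_fin_two_eq_sum_offDiag {ι R : Type*} [Fintype ι] [DecidableEq ι]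
    [AddCommMonoid R] (F : ι → ι → R) :
    ∑ e : Fin 2 ↪ ι, F (e 0) (e 1) = ∑ p ∈ univ.offDiag, F p.1 p.2 :=
  calc ∑ e : Fin 2 ↪ ι, F (e 0) (e 1)
      = ∑ p : {(a, b) : ι × ι | a ≠ b}, F p.1.1 p.1.2 :=
        Function.Embedding.twoEmbeddingEquiv.sum_comp (fun p => F p.1.1 p.1.2)
    _ = ∑ p ∈ univ.offDiag, F p.1 p.2 :=
        (sum_subtype (p := (· ∈ {(a, b) : ι × ι | a ≠ b})) _ (fun p => by simp)
          fun p => F p.1 p.2).symm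

theorem sq_sum_eq_sum_sq_add_sum_embedding_fin_two {ι R : Type*} [Fintype ι] [CommSemiring R]
    (x : ι → R) :
    (∑ i, x i) ^ 2 = ∑ i, x i ^ 2 + ∑ e : Fin 2 ↪ ι, x (e 0) * x (e 1) := by
  classical
  rw [sum_embedding_fin_two_eq_sum_offDiag fun a b => x a * x b, sq, sum_mul_sum, ← sum_product',
    ← diag_union_offDiag, sum_union (disjoint_diag_offDiag _), sum_diag]
  simp only [sq]

section Embedding

open Fintype

variable {ι α R : Type*} [Fintype ι] [Fintype α]

theorem card_mul_sum_embedding_apply [CommSemiring R] (h : α → R) (i : ι) :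
    card α * ∑ f : ι ↪ α, h (f i) = card (ι ↪ α) * ∑ a, h a :=
  MulActionHom.card_mul_sum_comp_of_isPretransitive (G := Equiv.Perm α)
    { toFun := fun f : ι ↪ α => f i, map_smul' := fun _ _ => rfl } h

theorem card_mul_sum_embedding_trans [CommSemiring R] {κ : Type*} [Fintype κ] (e : κ ↪ ι)
    (h : (κ ↪ α) → R) :
    card (κ ↪ α) * ∑ f : ι ↪ α, h (e.trans f) = card (ι ↪ α) * ∑ p, h p := by
  have : IsPretransitive (Equiv.Perm α) (κ ↪ α) := ⟨Equiv.Perm.exists_smul_eq_embedding⟩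
  exact MulActionHom.card_mul_sum_comp_of_isPretransitive (G := Equiv.Perm α)
    { toFun := e.trans, map_smul' := fun _ _ => rfl } h

theorem card_embedding_fin_two [Ring R] : (card (Fin 2 ↪ α) : R) = card α * (card α - 1) := by
  rw [card_embedding_eq, Fintype.card_fin, Nat.cast_descFactorial_two]

theorem card_mul_sum_embedding_sum_apply [CommSemiring R] (h : α → R) :
    card α * ∑ f : ι ↪ α, ∑ i, h (f i) = card ι * card (ι ↪ α) * ∑ a, h a := by
  rw [Finset.sum_comm, mul_sum, Finset.sum_congr rfl fun i _ => card_mul_sum_embedding_apply h i,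
    sum_const, card_univ, nsmul_eq_mul, mul_assoc]

theorem card_mul_sum_embedding_sq_sum_apply [CommRing R] (h : α → R) :
    card α * (card α - 1) * ∑ f : ι ↪ α, (∑ i, h (f i)) ^ 2
      = card ι * card (ι ↪ α) *
          ((card α - 1) * ∑ a, h a ^ 2 +
            (card ι - 1) * ((∑ a, h a) ^ 2 - ∑ a, h a ^ 2)) := by
  have hpairs : ∑ p : Fin 2 ↪ α, h (p 0) * h (p 1) = (∑ a, h a) ^ 2 - ∑ a, h a ^ 2 :=
    eq_sub_of_add_eq' (sq_sum_eq_sum_sq_add_sum_embedding_fin_two h).symm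
  have hdiag := card_mul_sum_embedding_sum_apply (ι := ι) fun a => h a ^ 2
  have hoff :
      card α * (card α - 1) * ∑ f : ι ↪ α, ∑ e : Fin 2 ↪ ι, h (f (e 0)) * h (f (e 1))
      = card ι * (card ι - 1) * (card (ι ↪ α) * ((∑ a, h a) ^ 2 - ∑ a, h a ^ 2)) := by
    have key (e : Fin 2 ↪ ι) :=
      card_mul_sum_embedding_trans (R := R) e fun p : Fin 2 ↪ α => h (p 0) * h (p 1)
    simp only [card_embedding_fin_two, hpairs, Function.Embedding.trans_apply] at key
    rw [Finset.sum_comm, mul_sum, Finset.sum_congr rfl fun e _ => key e, sum_const, card_univ,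
      nsmul_eq_mul, card_embedding_fin_two]
  simp only [sq_sum_eq_sum_sq_add_sum_embedding_fin_two, sum_add_distrib, mul_add, hoff]
  linear_combination (card α - 1 : R) * hdiag

end Embedding

theorem unitVec_dotProduct_mulVec_unitVec {n : ℕ} (A : Matrix (Fin n) (Fin n) ℝ) (j : Fin n) :
    unitVec n j ⬝ᵥ A *ᵥ unitVec n j = n * A j j := by
  simp [unitVec, dotProduct, mulVec, mul_ite, ite_mul, sum_ite_eq', mul_comm, mul_left_comm]

theorem unitVectorEstimator_eq {n N : ℕ} (A : Matrix (Fin n) (Fin n) ℝ) (f : Fin N → Fin n) :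
    unitVectorEstimator n N A f = n / N * ∑ i, A.diag (f i) := by
  simp only [unitVectorEstimator, unitVec_dotProduct_mulVec_unitVec, ← mul_sum, diag_apply]
  ring

section WithoutReplacement

variable {n N : ℕ}

theorem card_injective_eq_card_embedding :
    Fintype.card {f : Fin N → Fin n // Function.Injective f} = Fintype.card (Fin N ↪ Fin n) :=
  Fintype.card_congr (Equiv.subtypeInjectiveEquivEmbedding (Fin N) (Fin n))

theorem isProbabilityMeasure_withoutReplacementMeasure (h : N ≤ n) :
    IsProbabilityMeasure (withoutReplacementMeasure n N) := by
  have : Nonempty {f : Fin N → Fin n // Function.Injective f} :=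
    ⟨⟨Fin.castLE h, Fin.castLE_injective h⟩⟩
  constructor
  rw [withoutReplacementMeasure, Measure.smul_apply, Measure.count_univ,
    ENat.card_eq_coe_fintype_card, ENat.toENNReal_coe, smul_eq_mul,
    ENNReal.inv_mul_cancel (by exact_mod_cast Fintype.card_ne_zero) (ENNReal.natCast_ne_top _)]

theorem integral_withoutReplacementMeasure (h : N ≤ n) (g : (Fin N → Fin n) → ℝ) :
    ∫ f, g f.1 ∂withoutReplacementMeasure n N
      = (Fintype.card (Fin N ↪ Fin n) : ℝ)⁻¹ * ∑ f : Fin N ↪ Fin n, g f := by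
  have := isProbabilityMeasure_withoutReplacementMeasure h
  rw [integral_fintype .of_finite, mul_sum,
    ← (Equiv.subtypeInjectiveEquivEmbedding (Fin N) (Fin n)).symm.sum_comp]
  simp only [withoutReplacementMeasure, card_injective_eq_card_embedding, measureReal_def,
    Measure.smul_apply, MeasurableSet.singleton, Measure.count_singleton', smul_eq_mul, mul_one,
    ENNReal.toReal_inv, ENNReal.toReal_natCast]
  rfl

end WithoutReplacement

/-- the variance of the unit vector trace estimator without replacement is
`Var(tr_{U₂}^N(A)) = ((n−N)/(N(n−1))) (n ∑ⱼ aⱼⱼ² − tr(A)²)`. -/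
theorem unit_vector_without_replacement_variance (n N : ℕ) (A : Matrix (Fin n) (Fin n) ℝ)
    (hn : 2 ≤ n) (hN : 1 ≤ N) (hNn : N ≤ n) :
    ProbabilityTheory.variance (fun f => unitVectorEstimator n N A f.1)
        (withoutReplacementMeasure n N)
      = (((n : ℝ) - N) / ((N : ℝ) * ((n : ℝ) - 1))) *
          ((n : ℝ) * ∑ j : Fin n, (A j j) ^ 2 - A.trace ^ 2) := by
  have := isProbabilityMeasure_withoutReplacementMeasure hNn
  have : Nonempty (Fin N ↪ Fin n) := ⟨Fin.castLEEmb hNn⟩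
  have hP : (Fintype.card (Fin N ↪ Fin n) : ℝ) ≠ 0 :=
    Nat.cast_ne_zero.mpr Fintype.card_ne_zero
  have hn0 : (n : ℝ) ≠ 0 := Nat.cast_ne_zero.mpr (by omega)
  have hn1 : (n : ℝ) - 1 ≠ 0 := sub_ne_zero.mpr (Nat.cast_ne_one.mpr (by omega))
  have hN0 : (N : ℝ) ≠ 0 := Nat.cast_ne_zero.mpr (by omega)
  have hmean := card_mul_sum_embedding_sum_apply (ι := Fin N) (R := ℝ) A.diag
  have hsq := card_mul_sum_embedding_sq_sum_apply (ι := Fin N) (R := ℝ) A.diag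
  simp only [Fintype.card_fin] at hmean hsq
  rw [ProbabilityTheory.variance_eq_sub .of_discrete, Pi.pow_def,
    integral_withoutReplacementMeasure hNn (unitVectorEstimator n N A · ^ 2),
    integral_withoutReplacementMeasure hNn (unitVectorEstimator n N A)]
  simp only [unitVectorEstimator_eq, mul_pow, ← mul_sum]
  rw [eq_div_of_mul_eq hn0 ((mul_comm _ _).trans hmean),
    eq_div_of_mul_eq (mul_ne_zero hn0 hn1) ((mul_comm _ _).trans hsq)]
  simp only [trace, diag_apply]
  field_simp
  ring
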